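/- Let F : ℝⁿ → ℝⁿ be continuously differentiable, let z ≠ 0 be a zero of F, suppose ‖F'(x)⁻¹‖ ≤ K, ‖F'(x) − F'(y)‖ ≤ L‖x − y‖, ‖F'(x)‖ ≤ M for all x, y, and let x_{k+1} = (I + D_k)(g(x_k) − E_k F'(x_k)⁻¹F(x_k)) with ‖D_k‖ ≤ D. Let λ ∈ (0,1] and C₁, C₂ > 0, and set r_k = ‖z − x_k‖/‖z‖. If ‖E_k‖ ≤ C₁ r_k^λ and D ≤ C₂ r_k^{1+λ}, then r_{k+1} ≤ [(1/2)LK(1 + D)‖z‖ r_k^{1−λ} + C₁KM(1 + D) + C₂] r_k^{1+λ}. -/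

import Mathlib

open intervalIntegral in
lemma taylor_quad {E : Type*} [NormedAddCommGroup E] [NormedSpace ℝ E] [CompleteSpace E]
    (F : E → E) (F' : E → (E →L[ℝ] E)) (hF : ∀ u, HasFDerivAt F (F' u) u)
    (hc : Continuous F') (L : ℝ)
    (hLip : ∀ u v, ‖F' u - F' v‖ ≤ L * ‖u - v‖) (x z : E) :
    ‖F z - F x - F' x (z - x)‖ ≤ L / 2 * ‖z - x‖ ^ 2 := by
  set e := z - x with he
  set γ : ℝ → E := fun t => x + t • e with hγdef
  have hγc : Continuous γ := by continuity
  have hγ : ∀ t : ℝ, HasDerivAt γ e t := by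
    intro t
    have h1 : HasDerivAt (fun s : ℝ => s • e) ((1:ℝ) • e) t :=
      (hasDerivAt_id t).smul_const e
    simpa [hγdef] using h1.const_add x
  have hφ : ∀ t : ℝ, HasDerivAt (fun s => F (γ s)) (F' (γ t) e) t := fun t =>
    (hF (γ t)).comp_hasDerivAt t (hγ t)
  have hcont : Continuous fun t => F' (γ t) e := (hc.comp hγc).clm_apply continuous_const
  have hint : F z - F x = ∫ t in (0:ℝ)..1, F' (γ t) e := by
    have h := integral_eq_sub_of_hasDerivAt (f := fun s => F (γ s))
      (fun t _ => hφ t) (hcont.intervalIntegrable 0 1)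
    have h0 : γ 0 = x := by simp [hγdef]
    have h1 : γ 1 = z := by simp [hγdef, he]
    simp only [h, h0, h1]
  have hconst : F' x e = ∫ t in (0:ℝ)..1, F' x e := by simp
  have hsub : F z - F x - F' x e = ∫ t in (0:ℝ)..1, (F' (γ t) e - F' x e) := by
    rw [hint, hconst, integral_sub (hcont.intervalIntegrable 0 1)
      (continuous_const.intervalIntegrable 0 1)]
    simp
  rw [hsub]
  have hg : IntervalIntegrable (fun t => L * ‖e‖ ^ 2 * t) MeasureTheory.volume 0 1 :=
    (continuous_const.mul continuous_id).intervalIntegrable 0 1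
  have hbd : ∀ t ∈ Set.uIoc (0:ℝ) 1, ‖F' (γ t) e - F' x e‖ ≤ L * ‖e‖ ^ 2 * t := by
    intro t ht
    rw [Set.uIoc_of_le zero_le_one] at ht
    have h1 : ‖F' (γ t) e - F' x e‖ ≤ ‖F' (γ t) - F' x‖ * ‖e‖ := by
      have := (F' (γ t) - F' x).le_opNorm e
      simpa using this
    have h2 : ‖F' (γ t) - F' x‖ ≤ L * (t * ‖e‖) := by
      have := hLip (γ t) x
      have hγx : γ t - x = t • e := by simp [hγdef]
      rw [hγx, norm_smul] at this
      simpa [abs_of_pos ht.1] using this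
    calc ‖F' (γ t) e - F' x e‖ ≤ (L * (t * ‖e‖)) * ‖e‖ :=
          h1.trans (mul_le_mul_of_nonneg_right h2 (norm_nonneg _))
      _ = L * ‖e‖ ^ 2 * t := by ring
  have hnorm := norm_integral_le_of_norm_le (μ := MeasureTheory.volume) zero_le_one
    (Filter.Eventually.of_forall fun t ht => hbd t (by rw [Set.uIoc_of_le zero_le_one]; exact ht)) hg
  have hval : (∫ t in (0:ℝ)..1, L * ‖e‖ ^ 2 * t) = L / 2 * ‖e‖ ^ 2 := by
    rw [intervalIntegral.integral_const_mul]
    simp [integral_id]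
    ring
  rw [hval] at hnorm
  refine hnorm.trans ?_
  exact le_rfl


/-- **Section 3.2, inequality (16).** Under the uniform bounds
`‖F'(x)⁻¹‖ ≤ K`, `‖F'(x) − F'(y)‖ ≤ L‖x − y‖`, `‖F'(x)‖ ≤ M`, a nonzero zero
`z` of `F`, the perturbed quasi-Newton iteration with `‖D_k‖ ≤ D`,
`λ ∈ (0,1]` and `C₁, C₂ > 0`: if `‖E_k‖ ≤ C₁ r_k^λ` and `D ≤ C₂ r_k^{1+λ}`
where `r_k = ‖z − x_k‖/‖z‖`, then
`r_{k+1} ≤ [(1/2)LK(1 + D)‖z‖ r_k^{1−λ} + C₁KM(1 + D) + C₂] r_k^{1+λ}`. -/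
theorem quasi_newton_superlinear_decay {n : ℕ}
    (F : EuclideanSpace ℝ (Fin n) → EuclideanSpace ℝ (Fin n))
    (F' F'inv : EuclideanSpace ℝ (Fin n) →
      (EuclideanSpace ℝ (Fin n) →L[ℝ] EuclideanSpace ℝ (Fin n)))
    (hF : ∀ u, HasFDerivAt F (F' u) u)
    (hF'c : Continuous F')
    (hinv : ∀ u,
      (F' u).comp (F'inv u) = ContinuousLinearMap.id ℝ (EuclideanSpace ℝ (Fin n)) ∧
      (F'inv u).comp (F' u) = ContinuousLinearMap.id ℝ (EuclideanSpace ℝ (Fin n)))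
    (K L M : ℝ)
    (hK : ∀ u, ‖F'inv u‖ ≤ K)
    (hLip : ∀ u v, ‖F' u - F' v‖ ≤ L * ‖u - v‖)
    (hM : ∀ u, ‖F' u‖ ≤ M)
    (z : EuclideanSpace ℝ (Fin n)) (hz : F z = 0) (hz0 : z ≠ 0)
    (x : ℕ → EuclideanSpace ℝ (Fin n))
    (Dk Ek : ℕ → (EuclideanSpace ℝ (Fin n) →L[ℝ] EuclideanSpace ℝ (Fin n)))
    (hiter : ∀ k, x (k + 1) =
      ((x k - (F'inv (x k)) (F (x k))) - (Ek k) ((F'inv (x k)) (F (x k)))) +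
      (Dk k) ((x k - (F'inv (x k)) (F (x k))) - (Ek k) ((F'inv (x k)) (F (x k)))))
    (D : ℝ) (hD : ∀ k, ‖Dk k‖ ≤ D)
    (lam : ℝ) (hlam0 : 0 < lam) (hlam1 : lam ≤ 1)
    (C₁ C₂ : ℝ) (hC₁ : 0 < C₁) (hC₂ : 0 < C₂)
    (r : ℕ → ℝ) (hr : ∀ j, r j = ‖z - x j‖ / ‖z‖) :
    ∀ k, ‖Ek k‖ ≤ C₁ * r k ^ lam → D ≤ C₂ * r k ^ (1 + lam) →
      r (k + 1) ≤
        ((1 / 2) * L * K * (1 + D) * ‖z‖ * r k ^ (1 - lam) +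
          C₁ * K * M * (1 + D) + C₂) * r k ^ (1 + lam) := by
  have taylor : ∀ u, ‖F z - F u - F' u (z - u)‖ ≤ L / 2 * ‖z - u‖ ^ 2 := fun u =>
    taylor_quad F F' hF hF'c L hLip u z
  intro k hE hDr
  have hzpos : (0:ℝ) < ‖z‖ := norm_pos_iff.mpr hz0
  set e : EuclideanSpace ℝ (Fin n) := z - x k with he_def
  set v : EuclideanSpace ℝ (Fin n) := F'inv (x k) (F (x k)) with hv_def
  have hrk : r k = ‖e‖ / ‖z‖ := hr k
  have he : ‖e‖ = r k * ‖z‖ := by rw [hrk]; field_simp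
  have hr0 : 0 ≤ r k := by rw [hrk]; positivity
  have hK0 : 0 ≤ K := le_trans (norm_nonneg _) (hK z)
  have hM0 : 0 ≤ M := le_trans (norm_nonneg _) (hM z)
  have hD0 : 0 ≤ D := le_trans (norm_nonneg _) (hD 0)
  have hL0 : 0 ≤ L := by
    have h := hLip z 0
    rw [sub_zero] at h
    nlinarith [norm_nonneg (F' z - F' 0)]
  -- bound on F (x k)
  have hFx : ‖F (x k)‖ ≤ M * ‖e‖ := by
    have h := Convex.norm_image_sub_le_of_norm_hasFDerivWithin_le
      (f := F) (f' := F') (s := Set.univ)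
      (fun u _ => (hF u).hasFDerivWithinAt) (fun u _ => hM u) convex_univ
      (Set.mem_univ z) (Set.mem_univ (x k))
    rw [hz, sub_zero] at h
    calc ‖F (x k)‖ ≤ M * ‖x k - z‖ := h
      _ = M * ‖e‖ := by rw [he_def, norm_sub_rev]
  -- bound on v
  have hv : ‖v‖ ≤ K * (M * ‖e‖) := by
    calc ‖v‖ ≤ ‖F'inv (x k)‖ * ‖F (x k)‖ := (F'inv (x k)).le_opNorm _
      _ ≤ K * (M * ‖e‖) := by
          apply mul_le_mul (hK _) hFx (norm_nonneg _) hK0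
  -- Newton error
  have hkey : e + v = - (F'inv (x k)) (F z - F (x k) - F' (x k) e) := by
    have hid : (F'inv (x k)) (F' (x k) e) = e := by
      have h2 := (hinv (x k)).2
      have := congrArg (fun (T : EuclideanSpace ℝ (Fin n) →L[ℝ] EuclideanSpace ℝ (Fin n)) => T e) h2
      simpa using this
    rw [map_sub, map_sub, hz, map_zero, hid]
    rw [← hv_def]
    abel
  have hzN : ‖e + v‖ ≤ K * (L / 2 * ‖e‖ ^ 2) := by
    rw [hkey, norm_neg]
    calc ‖(F'inv (x k)) (F z - F (x k) - F' (x k) e)‖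
        ≤ ‖F'inv (x k)‖ * ‖F z - F (x k) - F' (x k) e‖ := (F'inv (x k)).le_opNorm _
      _ ≤ K * (L / 2 * ‖e‖ ^ 2) :=
          mul_le_mul (hK _) (taylor (x k)) (norm_nonneg _) hK0
  -- bound on z - w
  set w : EuclideanSpace ℝ (Fin n) := (x k - v) - Ek k v with hw_def
  have hC1r : (0:ℝ) ≤ C₁ * r k ^ lam := by positivity
  have hzw : ‖z - w‖ ≤ K * (L / 2 * ‖e‖ ^ 2) + C₁ * r k ^ lam * (K * (M * ‖e‖)) := by
    have hrw : z - w = (e + v) + Ek k v := by rw [hw_def, he_def]; abel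
    rw [hrw]
    refine (norm_add_le _ _).trans (add_le_add hzN ?_)
    calc ‖Ek k v‖ ≤ ‖Ek k‖ * ‖v‖ := (Ek k).le_opNorm _
      _ ≤ C₁ * r k ^ lam * (K * (M * ‖e‖)) :=
          mul_le_mul hE hv (norm_nonneg _) hC1r
  -- iteration identity
  have hx1 : z - x (k + 1) = (z - w) + Dk k (z - w) - Dk k z := by
    rw [hiter k, ← hv_def, ← hw_def, map_sub (Dk k) z w]
    abel
  have hDnorm : ∀ u : EuclideanSpace ℝ (Fin n), ‖Dk k u‖ ≤ D * ‖u‖ := fun u =>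
    ((Dk k).le_opNorm u).trans (mul_le_mul_of_nonneg_right (hD k) (norm_nonneg _))
  have hbound : ‖z - x (k + 1)‖ ≤
      (1 + D) * (K * (L / 2 * ‖e‖ ^ 2) + C₁ * r k ^ lam * (K * (M * ‖e‖))) + D * ‖z‖ := by
    rw [hx1]
    calc ‖(z - w) + Dk k (z - w) - Dk k z‖
        ≤ ‖z - w‖ + ‖Dk k (z - w)‖ + ‖Dk k z‖ := norm_sub_le_of_le (norm_add_le _ _) le_rfl
      _ ≤ ‖z - w‖ + D * ‖z - w‖ + D * ‖z‖ := by
          gcongr <;> [exact hDnorm _; exact hDnorm _]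
      _ = (1 + D) * ‖z - w‖ + D * ‖z‖ := by ring
      _ ≤ (1 + D) * (K * (L / 2 * ‖e‖ ^ 2) + C₁ * r k ^ lam * (K * (M * ‖e‖))) + D * ‖z‖ := by
          nlinarith [hzw, hD0]
  -- rpow identities
  have hb : r k ^ (1 + lam) = r k * r k ^ lam := by
    rw [Real.rpow_add' hr0 (by linarith), Real.rpow_one]
  have hsq : r k ^ (1 - lam) * r k ^ (1 + lam) = r k ^ 2 := by
    rw [← Real.rpow_add' hr0 (by norm_num)]
    norm_num
  -- final arithmetic
  have hr1 : r (k + 1) ≤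
      ((1 + D) * (K * (L / 2 * ‖e‖ ^ 2) + C₁ * r k ^ lam * (K * (M * ‖e‖))) + D * ‖z‖) / ‖z‖ := by
    rw [hr (k + 1)]
    gcongr
  refine hr1.trans ?_
  rw [he]
  have hexp : ((1 + D) * (K * (L / 2 * (r k * ‖z‖) ^ 2) + C₁ * r k ^ lam * (K * (M * (r k * ‖z‖)))) + D * ‖z‖) / ‖z‖
      = (1 + D) * (K * (L / 2 * (r k ^ 2 * ‖z‖)) + C₁ * r k ^ lam * (K * (M * r k))) + D := by
    field_simp
  rw [hexp]
  calc (1 + D) * (K * (L / 2 * (r k ^ 2 * ‖z‖)) + C₁ * r k ^ lam * (K * (M * r k))) + D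
      = (1 / 2) * L * K * (1 + D) * ‖z‖ * r k ^ (1 - lam) * r k ^ (1 + lam) +
        C₁ * K * M * (1 + D) * r k ^ (1 + lam) + D := by
        rw [← hsq, hb]; ring
    _ ≤ (1 / 2) * L * K * (1 + D) * ‖z‖ * r k ^ (1 - lam) * r k ^ (1 + lam) +
        C₁ * K * M * (1 + D) * r k ^ (1 + lam) + C₂ * r k ^ (1 + lam) := by linarith
    _ = ((1 / 2) * L * K * (1 + D) * ‖z‖ * r k ^ (1 - lam) +
          C₁ * K * M * (1 + D) + C₂) * r k ^ (1 + lam) := by ring
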